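/- arXiv:1305.5813 — 3 statements merged into one kernel-verified Lean document; each statement's English description precedes it below -/
import Mathlib

section
/- Assume (Ω) and (C1)-(C3). Let x ∈ R^N, t ∈ [0,T), and let X : [0,t] → R^N be any Lipschitz solution of the differential inclusion X'(s) ∈ B(X(s), t-s) a.e. with X(0) = x. Then there exists a measurable control a = (α_1, α_2, μ) ∈ L^∞(0,t; A) such that for almost every s ∈ (0,t): X'(s) = b_1(X(s), t-s, α_1(s)) if X(s) ∈ Ω_1, X'(s) = b_2(X(s), t-s, α_2(s)) if X(s) ∈ Ω_2, and X'(s) = b_H(X(s), t-s, a(s)) if X(s) ∈ H. -/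
open Set Metric MeasureTheory Filter Topology
open scoped RealInnerProductSpace NNReal

noncomputable section

abbrev RN (N : ℕ) : Type := EuclideanSpace ℝ (Fin N)

/-- Assumption (Ω): a two-domain decomposition of `ℝ^N` with a `W^{2,∞}` interface
`H = frontier Ω1 = frontier Ω2`, encoded through the signed distance function `sd`
(positive in `Ω1`, negative in `Ω2`) which is `C¹` with Lipschitz gradient of norm one
in a neighborhood of the interface. -/
structure TwoDomains (N : ℕ) : Type where
  Ω1 : Set (RN N)
  Ω2 : Set (RN N)
  open1 : IsOpen Ω1
  open2 : IsOpen Ω2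
  disj : Disjoint Ω1 Ω2
  frontier_eq : frontier Ω1 = frontier Ω2
  cover : Ω1 ∪ Ω2 ∪ frontier Ω1 = Set.univ
  sd : RN N → ℝ
  nbhd : Set (RN N)
  nbhd_open : IsOpen nbhd
  frontier_sub_nbhd : frontier Ω1 ⊆ nbhd
  gradLipConst : ℝ≥0
  sd_pos : ∀ x ∈ Ω1, sd x = Metric.infDist x (frontier Ω1)
  sd_neg : ∀ x ∈ Ω2, sd x = -Metric.infDist x (frontier Ω1)
  sd_zero : ∀ x ∈ frontier Ω1, sd x = 0
  sd_C1 : ContDiffOn ℝ 1 sd nbhd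
  sd_grad_lip : LipschitzOnWith gradLipConst (fun x => gradient sd x) nbhd
  sd_grad_norm : ∀ x ∈ nbhd, ‖gradient sd x‖ = 1

namespace TwoDomains

variable {N : ℕ} (D : TwoDomains N)

/-- The interface `H`. -/
def H : Set (RN N) := frontier D.Ω1

/-- Unit normal to `∂Ω1` pointing outwards `Ω1`. -/
def n1 (z : RN N) : RN N := -gradient D.sd z

/-- Unit normal to `∂Ω2` pointing outwards `Ω2`. -/
def n2 (z : RN N) : RN N := gradient D.sd z

end TwoDomains

/-- Time derivative `φ_t` of a test function on `ℝ^N × ℝ`. -/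
def tDeriv {N : ℕ} (φ : RN N × ℝ → ℝ) (x : RN N) (t : ℝ) : ℝ :=
  deriv (fun s => φ (x, s)) t

/-- Spatial gradient `Dφ` of a test function on `ℝ^N × ℝ`. -/
def xGrad {N : ℕ} (φ : RN N × ℝ → ℝ) (x : RN N) (t : ℝ) : RN N :=
  gradient (fun y => φ (y, t)) x

/-- Tangential gradient `D_H φ` along the interface. -/
def tanGrad {N : ℕ} (D : TwoDomains N) (φ : RN N × ℝ → ℝ) (x : RN N) (t : ℝ) : RN N :=
  xGrad φ x t - ⟪xGrad φ x t, D.n1 x⟫ • D.n1 x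

/-- Bounded function of `(x,t)`. -/
def BddFun {N : ℕ} (u : RN N → ℝ → ℝ) : Prop := ∃ M, ∀ x t, |u x t| ≤ M

/-- Upper semicontinuity on `ℝ^N × [0,T]`. -/
def USCFun {N : ℕ} (T : ℝ) (u : RN N → ℝ → ℝ) : Prop :=
  UpperSemicontinuousOn (fun q : RN N × ℝ => u q.1 q.2) ((univ : Set (RN N)) ×ˢ Icc 0 T)

/-- Lower semicontinuity on `ℝ^N × [0,T]`. -/
def LSCFun {N : ℕ} (T : ℝ) (u : RN N → ℝ → ℝ) : Prop :=
  LowerSemicontinuousOn (fun q : RN N × ℝ => u q.1 q.2) ((univ : Set (RN N)) ×ˢ Icc 0 T)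

/-- Upper semicontinuous envelope `u^*` relative to `ℝ^N × [0,T]`. -/
def uscEnv {N : ℕ} (T : ℝ) (u : RN N → ℝ → ℝ) : RN N → ℝ → ℝ := fun x t =>
  limsup (fun q : RN N × ℝ => u q.1 q.2) (nhdsWithin (x, t) ((univ : Set (RN N)) ×ˢ Icc 0 T))

/-- Lower semicontinuous envelope `u_*` relative to `ℝ^N × [0,T]`. -/
def lscEnv {N : ℕ} (T : ℝ) (u : RN N → ℝ → ℝ) : RN N → ℝ → ℝ := fun x t =>
  liminf (fun q : RN N × ℝ => u q.1 q.2) (nhdsWithin (x, t) ((univ : Set (RN N)) ×ˢ Icc 0 T))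

/-- Admissible stopping values `θ` for a trajectory `Y` relative to the open set `Ω`:
either `Y` reaches `∂Ω` at time `θ` having stayed in `cl Ω` before (this encodes
`τ ≤ θ ≤ τ̄` and `Y(θ) ∈ ∂Ω`), or `θ ≥ σ` and the trajectory stayed in `cl Ω`
(this encodes the case where no exit occurs before `σ`). -/
def StopOK {N : ℕ} (Ω : Set (RN N)) (Y : ℝ → RN N) (σ θ : ℝ) : Prop :=
  0 ≤ θ ∧ (∀ s ∈ Ico 0 θ, Y s ∈ closure Ω) ∧ (Y θ ∈ frontier Ω ∨ σ ≤ θ)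

/-- The half-relaxed lower limit `liminf_* v_ε (x,t)`. -/
def liminfStar {N : ℕ} (v : ℝ → RN N → ℝ → ℝ) : RN N → ℝ → ℝ := fun x t =>
  liminf (fun q : ℝ × RN N × ℝ => v q.1 q.2.1 q.2.2) ((nhdsWithin 0 (Ioi 0)) ×ˢ nhds (x, t))

/-- The half-relaxed upper limit `limsup^* u_ε (x,t)`. -/
def limsupStar {N : ℕ} (u : ℝ → RN N → ℝ → ℝ) : RN N → ℝ → ℝ := fun x t =>
  limsup (fun q : ℝ × RN N × ℝ => u q.1 q.2.1 q.2.2) ((nhdsWithin 0 (Ioi 0)) ×ˢ nhds (x, t))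

/-- The controlled dynamics and running costs on the two domains. -/
structure CtrlData (N : ℕ) (A1 A2 : Type) : Type where
  b1 : RN N → ℝ → A1 → RN N
  b2 : RN N → ℝ → A2 → RN N
  l1 : RN N → ℝ → A1 → ℝ
  l2 : RN N → ℝ → A2 → ℝ

namespace CtrlData

variable {N : ℕ} {A1 A2 : Type} [MetricSpace A1] [MetricSpace A2]

section Basic

variable (C : CtrlData N A1 A2) (D : TwoDomains N)

/-- Boundary dynamics `b_H(z,t,(α1,α2,μ)) = μ b1 + (1-μ) b2`. -/
def bH (z : RN N) (t : ℝ) (a : A1 × A2 × ℝ) : RN N :=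
  a.2.2 • C.b1 z t a.1 + (1 - a.2.2) • C.b2 z t a.2.1

/-- Boundary cost `l_H(z,t,(α1,α2,μ)) = μ l1 + (1-μ) l2`. -/
def lH (z : RN N) (t : ℝ) (a : A1 × A2 × ℝ) : ℝ :=
  a.2.2 * C.l1 z t a.1 + (1 - a.2.2) * C.l2 z t a.2.1

/-- Controls whose boundary dynamic is tangent to the interface. -/
def A0 (z : RN N) (t : ℝ) : Set (A1 × A2 × ℝ) :=
  {a | a.2.2 ∈ Icc (0:ℝ) 1 ∧ ⟪C.bH z t a, D.n1 z⟫ = 0}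

/-- Regular tangential controls. -/
def A0reg (z : RN N) (t : ℝ) : Set (A1 × A2 × ℝ) :=
  {a | a ∈ C.A0 D z t ∧ 0 ≤ ⟪C.b1 z t a.1, D.n1 z⟫ ∧ 0 ≤ ⟪C.b2 z t a.2.1, D.n2 z⟫}

open Classical in
/-- The set-valued map `B(z,s)` of the differential inclusion. -/
def Bset (z : RN N) (s : ℝ) : Set (RN N) :=
  if z ∈ D.Ω1 then Set.range (C.b1 z s)
  else if z ∈ D.Ω2 then Set.range (C.b2 z s)
  else closure (convexHull ℝ (Set.range (C.b1 z s) ∪ Set.range (C.b2 z s)))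

open Classical in
/-- The Lagrangian `ℓ`. -/
def lag (z : RN N) (t : ℝ) (a : A1 × A2 × ℝ) : ℝ :=
  if z ∈ D.Ω1 then C.l1 z t a.1 else if z ∈ D.Ω2 then C.l2 z t a.2.1 else C.lH z t a

/-- Hamiltonian `H1`. -/
def Ham1 (x : RN N) (t : ℝ) (p : RN N) : ℝ :=
  sSup (Set.range fun α : A1 => -⟪C.b1 x t α, p⟫ - C.l1 x t α)

/-- Hamiltonian `H2`. -/
def Ham2 (x : RN N) (t : ℝ) (p : RN N) : ℝ :=
  sSup (Set.range fun α : A2 => -⟪C.b2 x t α, p⟫ - C.l2 x t α)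

/-- Tangential Hamiltonian `H_T`. -/
def HamT (z : RN N) (t : ℝ) (p : RN N) : ℝ :=
  sSup ((fun a : A1 × A2 × ℝ => -⟪C.bH z t a, p⟫ - C.lH z t a) '' C.A0 D z t)

/-- Regular tangential Hamiltonian `H_T^reg`. -/
def HamTreg (z : RN N) (t : ℝ) (p : RN N) : ℝ :=
  sSup ((fun a : A1 × A2 × ℝ => -⟪C.bH z t a, p⟫ - C.lH z t a) '' C.A0reg D z t)

/-- Assumption (C1). -/
def HypC1 (T Mb Lb : ℝ) : Prop :=
  ContinuousOn (fun q : RN N × ℝ × A1 => C.b1 q.1 q.2.1 q.2.2)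
      (closure D.Ω1 ×ˢ (Icc 0 T ×ˢ (univ : Set A1))) ∧
  ContinuousOn (fun q : RN N × ℝ × A2 => C.b2 q.1 q.2.1 q.2.2)
      (closure D.Ω2 ×ˢ (Icc 0 T ×ˢ (univ : Set A2))) ∧
  (∀ (x : RN N) (t : ℝ) (α : A1), ‖C.b1 x t α‖ ≤ Mb) ∧
  (∀ (x : RN N) (t : ℝ) (α : A2), ‖C.b2 x t α‖ ≤ Mb) ∧
  (∀ z ∈ closure D.Ω1, ∀ z' ∈ closure D.Ω1, ∀ s ∈ Icc (0:ℝ) T, ∀ s' ∈ Icc (0:ℝ) T, ∀ α : A1,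
      ‖C.b1 z s α - C.b1 z' s' α‖ ≤ Lb * (‖z - z'‖ + |s - s'|)) ∧
  (∀ z ∈ closure D.Ω2, ∀ z' ∈ closure D.Ω2, ∀ s ∈ Icc (0:ℝ) T, ∀ s' ∈ Icc (0:ℝ) T, ∀ α : A2,
      ‖C.b2 z s α - C.b2 z' s' α‖ ≤ Lb * (‖z - z'‖ + |s - s'|))

/-- Assumption (C2); `ml` is the modulus of continuity. -/
def HypC2 (T Ml : ℝ) (ml : ℝ → ℝ) : Prop :=
  (∀ (x : RN N) (t : ℝ) (α : A1), |C.l1 x t α| ≤ Ml) ∧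
  (∀ (x : RN N) (t : ℝ) (α : A2), |C.l2 x t α| ≤ Ml) ∧
  (∀ r, 0 ≤ ml r) ∧ Monotone ml ∧ ml 0 = 0 ∧ ContinuousAt ml 0 ∧
  (∀ z ∈ closure D.Ω1, ∀ z' ∈ closure D.Ω1, ∀ s ∈ Icc (0:ℝ) T, ∀ s' ∈ Icc (0:ℝ) T, ∀ α : A1,
      |C.l1 z s α - C.l1 z' s' α| ≤ ml (‖z - z'‖ + |s - s'|)) ∧
  (∀ z ∈ closure D.Ω2, ∀ z' ∈ closure D.Ω2, ∀ s ∈ Icc (0:ℝ) T, ∀ s' ∈ Icc (0:ℝ) T, ∀ α : A2,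
      |C.l2 z s α - C.l2 z' s' α| ≤ ml (‖z - z'‖ + |s - s'|))

/-- Assumption (C3). -/
def HypC3 (T : ℝ) : Prop :=
  (∀ z ∈ closure D.Ω1, ∀ s ∈ Icc (0:ℝ) T,
      IsClosed (Set.range fun α : A1 => (C.b1 z s α, C.l1 z s α)) ∧
      Convex ℝ (Set.range fun α : A1 => (C.b1 z s α, C.l1 z s α))) ∧
  (∀ z ∈ closure D.Ω2, ∀ s ∈ Icc (0:ℝ) T,
      IsClosed (Set.range fun α : A2 => (C.b2 z s α, C.l2 z s α)) ∧
      Convex ℝ (Set.range fun α : A2 => (C.b2 z s α, C.l2 z s α)))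

/-- Assumption (C4): normal controllability on the interface. -/
def HypC4 (T δ : ℝ) : Prop :=
  0 < δ ∧
  ∀ z ∈ D.H, ∀ s ∈ Icc (0:ℝ) T,
    Icc (-δ) δ ⊆ (Set.range fun α : A1 => ⟪C.b1 z s α, D.n1 z⟫) ∧
    Icc (-δ) δ ⊆ (Set.range fun α : A2 => ⟪C.b2 z s α, D.n2 z⟫)

/-- `Y` solves the ODE `Y' = b1(Y, t-s, α(s))`, `Y(0)=x`. -/
def SolODE1 (x : RN N) (t : ℝ) (α : ℝ → A1) (Y : ℝ → RN N) : Prop :=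
  Y 0 = x ∧ (∃ K : ℝ≥0, LipschitzWith K Y) ∧
  ∀ᵐ s ∂(volume.restrict (Ioo (0:ℝ) t)), HasDerivAt Y (C.b1 (Y s) (t - s) (α s)) s

/-- `Y` solves the ODE `Y' = b2(Y, t-s, α(s))`, `Y(0)=x`. -/
def SolODE2 (x : RN N) (t : ℝ) (α : ℝ → A2) (Y : ℝ → RN N) : Prop :=
  Y 0 = x ∧ (∃ K : ℝ≥0, LipschitzWith K Y) ∧
  ∀ᵐ s ∂(volume.restrict (Ioo (0:ℝ) t)), HasDerivAt Y (C.b2 (Y s) (t - s) (α s)) s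

/-- Viscosity subsolution of `u_t + H(x,t,Du) = 0` in `ℝ^N × (0,T)` (Ishii's definition). -/
def IsSubsol (T : ℝ) (u : RN N → ℝ → ℝ) : Prop :=
  ∀ φ : RN N × ℝ → ℝ, ContDiff ℝ 1 φ → ∀ (x : RN N), ∀ t ∈ Ioo (0:ℝ) T,
    IsLocalMax (fun q : RN N × ℝ => u q.1 q.2 - φ q) (x, t) →
    (x ∈ D.Ω1 → tDeriv φ x t + C.Ham1 x t (xGrad φ x t) ≤ 0) ∧
    (x ∈ D.Ω2 → tDeriv φ x t + C.Ham2 x t (xGrad φ x t) ≤ 0) ∧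
    (x ∈ D.H → tDeriv φ x t + min (C.Ham1 x t (xGrad φ x t)) (C.Ham2 x t (xGrad φ x t)) ≤ 0)

/-- Viscosity supersolution of `u_t + H(x,t,Du) = 0` in `ℝ^N × (0,T)` (Ishii's definition). -/
def IsSupersol (T : ℝ) (v : RN N → ℝ → ℝ) : Prop :=
  ∀ φ : RN N × ℝ → ℝ, ContDiff ℝ 1 φ → ∀ (x : RN N), ∀ t ∈ Ioo (0:ℝ) T,
    IsLocalMin (fun q : RN N × ℝ => v q.1 q.2 - φ q) (x, t) →
    (x ∈ D.Ω1 → 0 ≤ tDeriv φ x t + C.Ham1 x t (xGrad φ x t)) ∧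
    (x ∈ D.Ω2 → 0 ≤ tDeriv φ x t + C.Ham2 x t (xGrad φ x t)) ∧
    (x ∈ D.H → 0 ≤ tDeriv φ x t + max (C.Ham1 x t (xGrad φ x t)) (C.Ham2 x t (xGrad φ x t)))

/-- The complementary subsolution inequality `u_t + H_T(x,t,D_H u) ≤ 0` on `H × (0,T)`,
in the viscosity sense along `H`. -/
def IsSubsolHT (T : ℝ) (u : RN N → ℝ → ℝ) : Prop :=
  ∀ φ : RN N × ℝ → ℝ, ContDiff ℝ 1 φ → ∀ x ∈ D.H, ∀ t ∈ Ioo (0:ℝ) T,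
    (∀ z ∈ D.H, ∀ s ∈ Icc (0:ℝ) T, u z s - φ (z, s) ≤ u x t - φ (x, t)) →
    tDeriv φ x t + C.HamT D x t (tanGrad D φ x t) ≤ 0

/-- The complementary subsolution inequality `u_t + H_T^reg(x,t,D_H u) ≤ 0` on `H × (0,T)`,
in the viscosity sense along `H`. -/
def IsSubsolHTreg (T : ℝ) (u : RN N → ℝ → ℝ) : Prop :=
  ∀ φ : RN N × ℝ → ℝ, ContDiff ℝ 1 φ → ∀ x ∈ D.H, ∀ t ∈ Ioo (0:ℝ) T,
    (∀ z ∈ D.H, ∀ s ∈ Icc (0:ℝ) T, u z s - φ (z, s) ≤ u x t - φ (x, t)) →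
    tDeriv φ x t + C.HamTreg D x t (tanGrad D φ x t) ≤ 0

end Basic

section Traj

variable [MeasurableSpace A1] [MeasurableSpace A2]
variable (C : CtrlData N A1 A2) (D : TwoDomains N)

/-- Admissible controlled trajectories `(X,a) ∈ T_{x,t}`. -/
def IsTraj (x : RN N) (t : ℝ) (X : ℝ → RN N) (a : ℝ → A1 × A2 × ℝ) : Prop :=
  (∃ K : ℝ≥0, LipschitzOnWith K X (Icc 0 t)) ∧ X 0 = x ∧
  Measurable a ∧ (∀ s, (a s).2.2 ∈ Icc (0:ℝ) 1) ∧
  ∀ᵐ s ∂(volume.restrict (Ioo (0:ℝ) t)),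
    (X s ∈ D.Ω1 → HasDerivAt X (C.b1 (X s) (t - s) (a s).1) s) ∧
    (X s ∈ D.Ω2 → HasDerivAt X (C.b2 (X s) (t - s) (a s).2.1) s) ∧
    (X s ∈ D.H → HasDerivAt X (C.bH (X s) (t - s) (a s)) s)

/-- Regular admissible trajectories `(X,a) ∈ T^reg_{x,t}`. -/
def IsRegTraj (x : RN N) (t : ℝ) (X : ℝ → RN N) (a : ℝ → A1 × A2 × ℝ) : Prop :=
  C.IsTraj D x t X a ∧
  ∀ᵐ s ∂(volume.restrict (Ioo (0:ℝ) t)), X s ∈ D.H → a s ∈ C.A0reg D (X s) (t - s)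

/-- The cost functional `J(x,t;(X,a))`. -/
def cost (g : RN N → ℝ) (x : RN N) (t : ℝ) (X : ℝ → RN N) (a : ℝ → A1 × A2 × ℝ) : ℝ :=
  (∫ s in (0:ℝ)..t, C.lag D (X s) (t - s) (a s)) + g (X t)

/-- The value function `U^-`. -/
def Um (g : RN N → ℝ) (x : RN N) (t : ℝ) : ℝ :=
  sInf {r | ∃ X a, C.IsTraj D x t X a ∧ r = C.cost D g x t X a}

/-- The value function `U^+`. -/
def Up (g : RN N → ℝ) (x : RN N) (t : ℝ) : ℝ :=
  sInf {r | ∃ X a, C.IsRegTraj D x t X a ∧ r = C.cost D g x t X a}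

end Traj

end CtrlData

/-- Local uniform convergence of the data `(b1^ε,b2^ε,l1^ε,l2^ε) → (b1,b2,l1,l2)`
on `cl(Ω_i) × [0,T] × A_i` as `ε → 0⁺`. -/
def DataConverges {N : ℕ} {A1 A2 : Type} (D : TwoDomains N) (T : ℝ)
    (Cε : ℝ → CtrlData N A1 A2) (C : CtrlData N A1 A2) : Prop :=
  (∀ K : Set (RN N), IsCompact K → K ⊆ closure D.Ω1 →
    TendstoUniformlyOn (fun ε (q : RN N × ℝ × A1) => (Cε ε).b1 q.1 q.2.1 q.2.2)
      (fun q => C.b1 q.1 q.2.1 q.2.2) (nhdsWithin 0 (Ioi 0))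
      (K ×ˢ (Icc 0 T ×ˢ (univ : Set A1)))) ∧
  (∀ K : Set (RN N), IsCompact K → K ⊆ closure D.Ω2 →
    TendstoUniformlyOn (fun ε (q : RN N × ℝ × A2) => (Cε ε).b2 q.1 q.2.1 q.2.2)
      (fun q => C.b2 q.1 q.2.1 q.2.2) (nhdsWithin 0 (Ioi 0))
      (K ×ˢ (Icc 0 T ×ˢ (univ : Set A2)))) ∧
  (∀ K : Set (RN N), IsCompact K → K ⊆ closure D.Ω1 →
    TendstoUniformlyOn (fun ε (q : RN N × ℝ × A1) => (Cε ε).l1 q.1 q.2.1 q.2.2)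
      (fun q => C.l1 q.1 q.2.1 q.2.2) (nhdsWithin 0 (Ioi 0))
      (K ×ˢ (Icc 0 T ×ˢ (univ : Set A1)))) ∧
  (∀ K : Set (RN N), IsCompact K → K ⊆ closure D.Ω2 →
    TendstoUniformlyOn (fun ε (q : RN N × ℝ × A2) => (Cε ε).l2 q.1 q.2.1 q.2.2)
      (fun q => C.l2 q.1 q.2.1 q.2.2) (nhdsWithin 0 (Ioi 0))
      (K ×ˢ (Icc 0 T ×ˢ (univ : Set A2))))

open scoped ENNReal

/-!
This is Filippov's lemma. At almost every time `s` the velocity `X'(s)` lies in `B(X(s), t-s)`, and every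
vector of `B` is realized by some control `a = (α₁, α₂, μ)`: this is clear inside `Ω₁, Ω₂`, and on
`H` convexity (C3) and compactness of `B₁, B₂` make their closed convex hull equal to the set of
combinations `μ b₁ + (1-μ) b₂`. It then suffices to choose, measurably in `s`, a control
minimizing `|b(X(s), t-s, a) - X'(s)|`, a Carathéodory function of `(s, a)` (piecewise continuous
in `s` because `Ω₁, Ω₂` are open and `H` is closed). By the Hausdorff–Alexandroff theorem the
compact control space is a continuous image of the Cantor set `K ⊆ ℝ`, and on `K` the least
minimizer is measurable: it is `≤ c` exactly when the infimum over `K ∩ (-∞, c]` equals the global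
one, and both infima are countable ones by separability.
-/

section MeasurableArgmin

variable {α : Type*} [MeasurableSpace α]

theorem measurable_biInf_of_continuous {X : Type*} [TopologicalSpace X]
    [TopologicalSpace.PseudoMetrizableSpace X] [TopologicalSpace.SeparableSpace X]
    (Φ : α → X → ℝ≥0∞) (hc : ∀ s, Continuous (Φ s)) (hm : ∀ x, Measurable (Φ · x))
    (S : Set X) : Measurable fun s => ⨅ x ∈ S, Φ s x := by
  obtain ⟨D, hDS, hDc, hSD⟩ :=
    (TopologicalSpace.IsSeparable.of_separableSpace S).exists_countable_dense_subset
  have hD : ∀ s, ⨅ x ∈ S, Φ s x = ⨅ x ∈ D, Φ s x := fun s =>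
    (biInf_mono hDS).antisymm <| le_iInf₂ fun x hx =>
      have := mem_closure_iff_nhdsWithin_neBot.1 (hSD hx)
      ge_of_tendsto ((hc s).continuousWithinAt (s := D))
        (eventually_nhdsWithin_of_forall fun y hy => iInf₂_le y hy)
  simp_rw [hD]
  exact .biInf D hDc fun x _ => hm x

theorem exists_measurable_argmin_of_isCompact {K : Set ℝ} (hK : IsCompact K) [Nonempty K]
    (Φ : α → K → ℝ≥0∞) (hc : ∀ s, Continuous (Φ s)) (hm : ∀ x, Measurable (Φ · x)) :
    ∃ σ : α → K, Measurable σ ∧ ∀ s x, Φ s (σ s) ≤ Φ s x := by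
  have : CompactSpace K := isCompact_iff_compactSpace.1 hK
  set m : α → ℝ≥0∞ := fun s => ⨅ x, Φ s x
  set M : α → Set ℝ := fun s => (↑) '' {x | Φ s x ≤ m s}
  have hMc : ∀ s, IsCompact (M s) := fun s =>
    ((isClosed_le (hc s) continuous_const).isCompact).image continuous_subtype_val
  have hMne : ∀ s, (M s).Nonempty := fun s => by
    obtain ⟨x, -, hx⟩ := isCompact_univ.exists_isMinOn univ_nonempty (hc s).continuousOn
    exact ⟨x, x, show Φ s x ≤ m s from le_iInf fun y => hx (mem_univ y), rfl⟩
  have hσ : ∀ s, ∃ x : K, Φ s x ≤ m s ∧ (x : ℝ) = sInf (M s) := fun s =>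
    (hMc s).sInf_mem (hMne s)
  choose σ hσmin hσinf using hσ
  refine ⟨σ, ?_, fun s x => (hσmin s).trans (iInf_le _ x)⟩
  suffices Measurable fun s => (σ s : ℝ) from this.subtype_mk
  refine measurable_of_Iic fun c => ?_
  set T : Set K := {x | (x : ℝ) ≤ c}
  rcases T.eq_empty_or_nonempty with hT | hT
  · convert MeasurableSet.empty
    exact eq_empty_of_forall_notMem fun s hs => hT.subset (show σ s ∈ T from hs)
  have hTc : IsCompact T := (isClosed_le continuous_subtype_val continuous_const).isCompact
  convert measurableSet_le (measurable_biInf_of_continuous Φ hc hm T)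
    (by simpa only [iInf_univ] using measurable_biInf_of_continuous Φ hc hm univ) using 1
  ext s
  refine ⟨fun hs => (biInf_le (Φ s) (show σ s ∈ T from hs)).trans (hσmin s), fun hs => ?_⟩
  obtain ⟨y, hyT, hy⟩ := hTc.exists_isMinOn hT (hc s).continuousOn
  have hym : Φ s y ≤ m s := (le_iInf₂ fun x hx => hy hx).trans hs
  exact (hσinf s).trans_le ((csInf_le (hMc s).bddBelow ⟨y, hym, rfl⟩).trans hyT)

theorem exists_measurable_argmin {A : Type*} [MetricSpace A] [CompactSpace A] [Nonempty A]
    [MeasurableSpace A] [BorelSpace A]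
    (Φ : α → A → ℝ≥0∞) (hc : ∀ s, Continuous (Φ s)) (hm : ∀ a, Measurable (Φ · a)) :
    ∃ σ : α → A, Measurable σ ∧ ∀ s a, Φ s (σ s) ≤ Φ s a := by
  obtain ⟨π, hπc, hπs⟩ := exists_nat_bool_continuous_surjective_of_compact A
  set g : cantorSet → A := π ∘ cantorSetHomeomorphNatToBool
  have hg : Continuous g := hπc.comp cantorSetHomeomorphNatToBool.continuous
  have : Nonempty cantorSet := ⟨⟨0, zero_mem_cantorSet⟩⟩
  obtain ⟨σ, hσm, hσ⟩ := exists_measurable_argmin_of_isCompact isCompact_cantorSet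
    (fun s x => Φ s (g x)) (fun s => (hc s).comp hg) (fun x => hm (g x))
  refine ⟨g ∘ σ, hg.measurable.comp hσm, fun s a => ?_⟩
  obtain ⟨x, rfl⟩ := (hπs.comp cantorSetHomeomorphNatToBool.surjective) a
  exact hσ s x

end MeasurableArgmin

section ConvexJoin

variable {E : Type*} [AddCommGroup E] [Module ℝ E] [TopologicalSpace E] [ContinuousAdd E]
  [ContinuousSMul ℝ E] {s t : Set E}

theorem IsCompact.convexJoin (hs : IsCompact s) (ht : IsCompact t) :
    IsCompact (_root_.convexJoin ℝ s t) := by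
  have : _root_.convexJoin ℝ s t =
      (fun p : ℝ × E × E => (1 - p.1) • p.2.1 + p.1 • p.2.2) '' Icc 0 1 ×ˢ s ×ˢ t := by
    ext v
    simp only [mem_convexJoin, segment_eq_image, mem_image, mem_prod, Prod.exists]
    exact ⟨fun ⟨p, hp, q, hq, θ, hθ, h⟩ => ⟨θ, p, q, ⟨hθ, hp, hq⟩, h⟩,
      fun ⟨θ, p, q, ⟨hθ, hp, hq⟩, h⟩ => ⟨p, hp, q, hq, θ, hθ, h⟩⟩
  rw [this]
  exact (isCompact_Icc.prod (hs.prod ht)).image (by fun_prop)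

theorem closure_convexHull_union_eq_convexJoin [T2Space E] (hs : IsCompact s) (ht : IsCompact t)
    (hsc : Convex ℝ s) (htc : Convex ℝ t) (hs₀ : s.Nonempty) (ht₀ : t.Nonempty) :
    closure (convexHull ℝ (s ∪ t)) = convexJoin ℝ s t := by
  rw [hsc.convexHull_union htc hs₀ ht₀, (hs.convexJoin ht).isClosed.closure_eq]

end ConvexJoin

theorem measurable_of_continuousOn_of_continuousOn_compl {β γ : Type*} [TopologicalSpace β]
    [MeasurableSpace β] [OpensMeasurableSpace β] [TopologicalSpace γ] [MeasurableSpace γ]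
    [BorelSpace γ] {f : β → γ} {S : Set β} (hS : MeasurableSet S) (hf : ContinuousOn f S)
    (hf' : ContinuousOn f Sᶜ) : Measurable f :=
  measurable_of_restrict_of_restrict_compl hS
    (continuousOn_iff_continuous_domRestrict.1 hf).measurable
    (continuousOn_iff_continuous_domRestrict.1 hf').measurable

namespace TwoDomains

variable {N : ℕ} (D : TwoDomains N) {z : RN N}

theorem notMem_Ω1_of_mem_Ω2 (hz : z ∈ D.Ω2) : z ∉ D.Ω1 :=
  fun h => disjoint_left.1 D.disj h hz

theorem notMem_H_of_mem_Ω1 (hz : z ∈ D.Ω1) : z ∉ D.H :=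
  fun h => (D.open1.inter_frontier_eq.subset ⟨hz, h⟩).elim

theorem notMem_H_of_mem_Ω2 (hz : z ∈ D.Ω2) : z ∉ D.H :=
  fun h => (D.open2.inter_frontier_eq.subset ⟨hz, D.frontier_eq ▸ h⟩).elim

theorem mem_H_of_notMem (h1 : z ∉ D.Ω1) (h2 : z ∉ D.Ω2) : z ∈ D.H :=
  (D.cover.ge (mem_univ z)).resolve_left fun h => h.elim h1 h2

theorem H_subset_closure_Ω1 : D.H ⊆ closure D.Ω1 := frontier_subset_closure

theorem H_subset_closure_Ω2 : D.H ⊆ closure D.Ω2 :=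
  fun _ hz => frontier_subset_closure (D.frontier_eq ▸ hz)

end TwoDomains

namespace CtrlData

variable {N : ℕ} {A1 A2 : Type} (C : CtrlData N A1 A2) (D : TwoDomains N)

open Classical in
/-- The weight `μ` of `b_H` is part of the control, taken in `[0,1]` so that the control space
stays compact. -/
def dyn (z : RN N) (τ : ℝ) (a : A1 × A2 × Icc (0:ℝ) 1) : RN N :=
  if z ∈ D.Ω1 then C.b1 z τ a.1
  else if z ∈ D.Ω2 then C.b2 z τ a.2.1
  else C.bH z τ (a.1, a.2.1, a.2.2)

variable {C D} {z : RN N} {τ : ℝ}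

theorem dyn_of_mem_Ω1 (hz : z ∈ D.Ω1) (a : A1 × A2 × Icc (0:ℝ) 1) :
    C.dyn D z τ a = C.b1 z τ a.1 :=
  if_pos hz

theorem dyn_of_mem_Ω2 (hz : z ∈ D.Ω2) (a : A1 × A2 × Icc (0:ℝ) 1) :
    C.dyn D z τ a = C.b2 z τ a.2.1 := by
  rw [dyn, if_neg (D.notMem_Ω1_of_mem_Ω2 hz), if_pos hz]

theorem dyn_of_mem_H (hz : z ∈ D.H) (a : A1 × A2 × Icc (0:ℝ) 1) :
    C.dyn D z τ a = C.bH z τ (a.1, a.2.1, a.2.2) := by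
  rw [dyn, if_neg fun h => D.notMem_H_of_mem_Ω1 h hz, if_neg fun h => D.notMem_H_of_mem_Ω2 h hz]

variable {T : ℝ}

theorem HypC3.convex_range_b1 (hC3 : C.HypC3 D T) (hz : z ∈ closure D.Ω1) (hτ : τ ∈ Icc 0 T) :
    Convex ℝ (range (C.b1 z τ)) := by
  have := (hC3.1 z hz τ hτ).2.linear_image (LinearMap.fst ℝ (RN N) ℝ)
  rwa [← range_comp] at this

theorem HypC3.convex_range_b2 (hC3 : C.HypC3 D T) (hz : z ∈ closure D.Ω2) (hτ : τ ∈ Icc 0 T) :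
    Convex ℝ (range (C.b2 z τ)) := by
  have := (hC3.2 z hz τ hτ).2.linear_image (LinearMap.fst ℝ (RN N) ℝ)
  rwa [← range_comp] at this

variable [MetricSpace A1] [MetricSpace A2] {Mb Lb : ℝ}

theorem HypC1.continuous_b1 (hC1 : C.HypC1 D T Mb Lb) (hz : z ∈ closure D.Ω1)
    (hτ : τ ∈ Icc 0 T) : Continuous (C.b1 z τ) :=
  hC1.1.comp_continuous (f := fun α => (z, τ, α)) (by fun_prop) fun _ => ⟨hz, hτ, trivial⟩

theorem HypC1.continuous_b2 (hC1 : C.HypC1 D T Mb Lb) (hz : z ∈ closure D.Ω2)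
    (hτ : τ ∈ Icc 0 T) : Continuous (C.b2 z τ) :=
  hC1.2.1.comp_continuous (f := fun α => (z, τ, α)) (by fun_prop) fun _ => ⟨hz, hτ, trivial⟩

section Comp

variable {β : Type*} [TopologicalSpace β] {Y : β → RN N} {θ : β → ℝ} {S : Set β}

theorem HypC1.continuousOn_b1_comp (hC1 : C.HypC1 D T Mb Lb) (hY : Continuous Y)
    (hθ : Continuous θ) (hYS : MapsTo Y S (closure D.Ω1)) (hθT : ∀ s, θ s ∈ Icc 0 T) (α : A1) :
    ContinuousOn (fun s => C.b1 (Y s) (θ s) α) S :=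
  hC1.1.comp (f := fun s => (Y s, θ s, α)) (by fun_prop) fun s hs => ⟨hYS hs, hθT s, trivial⟩

theorem HypC1.continuousOn_b2_comp (hC1 : C.HypC1 D T Mb Lb) (hY : Continuous Y)
    (hθ : Continuous θ) (hYS : MapsTo Y S (closure D.Ω2)) (hθT : ∀ s, θ s ∈ Icc 0 T) (α : A2) :
    ContinuousOn (fun s => C.b2 (Y s) (θ s) α) S :=
  hC1.2.1.comp (f := fun s => (Y s, θ s, α)) (by fun_prop) fun s hs => ⟨hYS hs, hθT s, trivial⟩

theorem HypC1.continuousOn_bH_comp (hC1 : C.HypC1 D T Mb Lb) (hY : Continuous Y)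
    (hθ : Continuous θ) (hYS : MapsTo Y S D.H) (hθT : ∀ s, θ s ∈ Icc 0 T) (a : A1 × A2 × ℝ) :
    ContinuousOn (fun s => C.bH (Y s) (θ s) a) S := by
  have h1 := hC1.continuousOn_b1_comp hY hθ (hYS.mono_right D.H_subset_closure_Ω1) hθT a.1
  have h2 := hC1.continuousOn_b2_comp hY hθ (hYS.mono_right D.H_subset_closure_Ω2) hθT a.2.1
  unfold bH
  fun_prop

theorem HypC1.measurable_dyn_comp [MeasurableSpace β] [OpensMeasurableSpace β]
    (hC1 : C.HypC1 D T Mb Lb) (hY : Continuous Y) (hθ : Continuous θ)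
    (hθT : ∀ s, θ s ∈ Icc 0 T) (a : A1 × A2 × Icc (0:ℝ) 1) :
    Measurable fun s => C.dyn D (Y s) (θ s) a := by
  have hH : MapsTo Y (Y ⁻¹' D.H) D.H := fun _ hs => hs
  refine measurable_of_continuousOn_of_continuousOn_compl (S := Y ⁻¹' D.H)
    (isClosed_frontier.preimage hY).measurableSet ?_ ?_
  · exact (hC1.continuousOn_bH_comp hY hθ hH hθT _).congr fun s hs => dyn_of_mem_H hs a
  · have hcompl : (Y ⁻¹' D.H)ᶜ = Y ⁻¹' D.Ω1 ∪ Y ⁻¹' D.Ω2 := by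
      ext s
      have h1 := D.notMem_H_of_mem_Ω1 (z := Y s)
      have h2 := D.notMem_H_of_mem_Ω2 (z := Y s)
      have h3 := D.mem_H_of_notMem (z := Y s)
      simp only [mem_compl_iff, mem_preimage, mem_union]
      tauto
    rw [hcompl]
    refine ContinuousOn.union_of_isOpen ?_ ?_ (D.open1.preimage hY) (D.open2.preimage hY)
    · exact (hC1.continuousOn_b1_comp hY hθ (fun _ hs => subset_closure hs) hθT a.1).congr
        fun s hs => dyn_of_mem_Ω1 hs a
    · exact (hC1.continuousOn_b2_comp hY hθ (fun _ hs => subset_closure hs) hθT a.2.1).congr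
        fun s hs => dyn_of_mem_Ω2 hs a

end Comp

theorem HypC1.continuous_dyn (hC1 : C.HypC1 D T Mb Lb) (hτ : τ ∈ Icc 0 T) (z : RN N) :
    Continuous (C.dyn D z τ) := by
  by_cases h1 : z ∈ D.Ω1
  · simp only [funext (dyn_of_mem_Ω1 (τ := τ) (C := C) h1)]
    exact (hC1.continuous_b1 (subset_closure h1) hτ).comp continuous_fst
  by_cases h2 : z ∈ D.Ω2
  · simp only [funext (dyn_of_mem_Ω2 (τ := τ) (C := C) h2)]
    exact (hC1.continuous_b2 (subset_closure h2) hτ).comp (continuous_fst.comp continuous_snd)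
  have hH := D.mem_H_of_notMem h1 h2
  simp only [funext (dyn_of_mem_H (τ := τ) (C := C) hH), bH]
  have := hC1.continuous_b1 (D.H_subset_closure_Ω1 hH) hτ
  have := hC1.continuous_b2 (D.H_subset_closure_Ω2 hH) hτ
  fun_prop

theorem Bset_subset_range_dyn [CompactSpace A1] [Nonempty A1] [CompactSpace A2] [Nonempty A2]
    (hC1 : C.HypC1 D T Mb Lb) (hC3 : C.HypC3 D T) (hτ : τ ∈ Icc 0 T) :
    C.Bset D z τ ⊆ range (C.dyn D z τ) := by
  have h0 : (0:ℝ) ∈ Icc (0:ℝ) 1 := left_mem_Icc.2 zero_le_one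
  unfold Bset
  split_ifs with h1 h2
  · rintro _ ⟨α, rfl⟩
    exact ⟨(α, Classical.arbitrary A2, ⟨0, h0⟩), dyn_of_mem_Ω1 h1 _⟩
  · rintro _ ⟨α, rfl⟩
    exact ⟨(Classical.arbitrary A1, α, ⟨0, h0⟩), dyn_of_mem_Ω2 h2 _⟩
  have hH := D.mem_H_of_notMem h1 h2
  have hz1 := D.H_subset_closure_Ω1 hH
  have hz2 := D.H_subset_closure_Ω2 hH
  rw [closure_convexHull_union_eq_convexJoin (isCompact_range (hC1.continuous_b1 hz1 hτ))
    (isCompact_range (hC1.continuous_b2 hz2 hτ)) (hC3.convex_range_b1 hz1 hτ)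
    (hC3.convex_range_b2 hz2 hτ) (range_nonempty _) (range_nonempty _)]
  intro v hv
  obtain ⟨_, ⟨α1, rfl⟩, _, ⟨α2, rfl⟩, hv⟩ := mem_convexJoin.1 hv
  rw [segment_eq_image] at hv
  obtain ⟨θ, hθ, rfl⟩ := hv
  refine ⟨(α1, α2, ⟨1 - θ, by constructor <;> linarith [hθ.1, hθ.2]⟩), ?_⟩
  rw [dyn_of_mem_H hH]
  simp only [bH, sub_sub_cancel]

end CtrlData

theorem statement1_general
    {N : ℕ} (D : TwoDomains N) (T : ℝ)
    {A1 A2 : Type} [MetricSpace A1] [CompactSpace A1] [Nonempty A1]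
    [MetricSpace A2] [CompactSpace A2] [Nonempty A2]
    [MeasurableSpace A1] [BorelSpace A1] [MeasurableSpace A2] [BorelSpace A2]
    (C : CtrlData N A1 A2) (Mb Lb : ℝ)
    (hC1 : C.HypC1 D T Mb Lb) (hC3 : C.HypC3 D T)
    :
    ∀ (x : RN N), ∀ t ∈ Ico (0:ℝ) T, ∀ X : ℝ → RN N,
      (∃ K : ℝ≥0, LipschitzOnWith K X (Icc 0 t)) → X 0 = x →
      (∀ᵐ s ∂(volume.restrict (Ioo (0:ℝ) t)),
        ∃ v ∈ C.Bset D (X s) (t - s), HasDerivAt X v s) →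
      ∃ a : ℝ → A1 × A2 × ℝ, C.IsTraj D x t X a := by
  intro x t ht X ⟨K, hX⟩ hX0 hB
  set p : ℝ → ℝ := fun s => projIcc 0 t ht.1 s
  have hp : Continuous p := continuous_subtype_val.comp continuous_projIcc
  have hpt : ∀ s, p s ∈ Icc 0 t := fun s => (projIcc 0 t ht.1 s).2
  have hτT : ∀ s, t - p s ∈ Icc 0 T := fun s =>
    ⟨by linarith [(hpt s).2], by linarith [(hpt s).1, ht.2]⟩
  obtain ⟨σ, hσm, hσ⟩ := exists_measurable_argmin
    (fun s a => edist (C.dyn D (X (p s)) (t - p s) a) (deriv X s))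
    (fun s => (hC1.continuous_dyn (hτT s) _).edist continuous_const)
    (fun a => (hC1.measurable_dyn_comp (hX.continuousOn.comp_continuous hp hpt)
      (continuous_const.sub hp) hτT a).edist (measurable_deriv X))
  refine ⟨fun s => ((σ s).1, (σ s).2.1, (σ s).2.2), ⟨K, hX⟩, hX0, by fun_prop,
    fun s => (σ s).2.2.2, ?_⟩
  filter_upwards [hB, ae_restrict_mem measurableSet_Ioo] with s ⟨v, hvB, hv⟩ hs
  have hps : p s = s := congrArg Subtype.val (projIcc_of_mem ht.1 (Ioo_subset_Icc_self hs))
  obtain ⟨a, ha⟩ := CtrlData.Bset_subset_range_dyn hC1 hC3 (hps ▸ hτT s) hvB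
  have hσv : C.dyn D (X s) (t - s) (σ s) = v := by
    simpa only [hps, ha, hv.deriv, edist_self, nonpos_iff_eq_zero, edist_eq_zero] using hσ s a
  exact ⟨fun h => hv.congr_deriv (hσv.symm.trans (CtrlData.dyn_of_mem_Ω1 h _)),
    fun h => hv.congr_deriv (hσv.symm.trans (CtrlData.dyn_of_mem_Ω2 h _)),
    fun h => hv.congr_deriv (hσv.symm.trans (CtrlData.dyn_of_mem_H h _))⟩

/-- Theorem `def:dyn` (ii): any Lipschitz solution of the differential
inclusion can be represented by a measurable control `a = (α1, α2, μ)`. -/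
theorem statement1
    {N : ℕ} (D : TwoDomains N) (T : ℝ) (hT : 0 < T)
    {A1 A2 : Type} [MetricSpace A1] [CompactSpace A1] [Nonempty A1]
    [MetricSpace A2] [CompactSpace A2] [Nonempty A2]
    [MeasurableSpace A1] [BorelSpace A1] [MeasurableSpace A2] [BorelSpace A2]
    (C : CtrlData N A1 A2) (Mb Lb Ml : ℝ) (ml : ℝ → ℝ)
    (hC1 : C.HypC1 D T Mb Lb) (hC2 : C.HypC2 D T Ml ml) (hC3 : C.HypC3 D T)
    :
    ∀ (x : RN N), ∀ t ∈ Ico (0:ℝ) T, ∀ X : ℝ → RN N,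
      (∃ K : ℝ≥0, LipschitzOnWith K X (Icc 0 t)) → X 0 = x →
      (∀ᵐ s ∂(volume.restrict (Ioo (0:ℝ) t)),
        ∃ v ∈ C.Bset D (X s) (t - s), HasDerivAt X v s) →
      ∃ a : ℝ → A1 × A2 × ℝ, C.IsTraj D x t X a :=
  statement1_general D T C Mb Lb hC1 hC3
end
end

section
/- (Coercivity in the normal direction) Let N ≥ 1, let A be a compact metric space, let δ, M_b, M_l > 0, and let b : A → R^N and l : A → R be continuous with |b(α)| ≤ M_b and |l(α)| ≤ M_l for all α ∈ A, and such that {b(α)·e_N : α ∈ A} contains the interval [-δ, δ], where e_N is the N-th standard basis vector. Then for every p ∈ R^N, writing p = (p', p_N) ∈ R^{N-1} × R, one has sup_{α ∈ A} { -b(α)·p - l(α) } ≥ δ |p_N| - C_M (1 + |p'|), where C_M = max(M_b, M_l). -/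
/-!
Split `p = q + p_N e_N` with `q ⊥ e_N`, so `|q| = |p'|`. Normal controllability provides a control
`α` with `b(α)·e_N = -δ sign(p_N)`, for which `-b(α)·p = δ|p_N| - b(α)·q ≥ δ|p_N| - M_b|p'|`;
the supremum dominates this single value once the family is known to be bounded above.
-/

open Set
open scoped RealInnerProductSpace

section InnerProduct

variable {E : Type*} [NormedAddCommGroup E] [InnerProductSpace ℝ E]

lemma abs_inner_le_mul_norm_of_norm_le {b p : E} {M : ℝ} (hb : ‖b‖ ≤ M) :
    |⟪b, p⟫| ≤ M * ‖p‖ :=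
  (abs_real_inner_le_norm b p).trans (mul_le_mul_of_nonneg_right hb (norm_nonneg p))

lemma bddAbove_range_neg_inner_sub {A : Type*} (b : A → E) (l : A → ℝ) (p : E) {Mb Ml : ℝ}
    (hbM : ∀ α, ‖b α‖ ≤ Mb) (hlM : ∀ α, |l α| ≤ Ml) :
    BddAbove (range fun α => -⟪b α, p⟫ - l α) := by
  refine ⟨Mb * ‖p‖ + Ml, ?_⟩
  rintro _ ⟨α, rfl⟩
  linarith [(abs_le.mp (abs_inner_le_mul_norm_of_norm_le (p := p) (hbM α))).1,
    (abs_le.mp (hlM α)).1]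

lemma mul_abs_sub_norm_le_neg_inner {b e p : E} {t δ Mb : ℝ} (hb : ‖b‖ ≤ Mb)
    (hbe : t * ⟪b, e⟫ = -(δ * |t|)) :
    δ * |t| - Mb * ‖p - t • e‖ ≤ -⟪b, p⟫ := by
  have hsplit : ⟪b, p⟫ = ⟪b, p - t • e⟫ + t * ⟪b, e⟫ := by
    rw [inner_sub_right, real_inner_smul_right]
    ring
  linarith [(abs_le.mp (abs_inner_le_mul_norm_of_norm_le (p := p - t • e) hb)).2]

end InnerProduct

lemma exists_mem_Icc_mul_eq_neg_mul_abs {δ : ℝ} (hδ : 0 ≤ δ) (t : ℝ) :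
    ∃ s ∈ Icc (-δ) δ, t * s = -(δ * |t|) := by
  rcases le_or_gt 0 t with ht | ht
  · exact ⟨-δ, ⟨le_rfl, by linarith⟩, by rw [abs_of_nonneg ht]; ring⟩
  · exact ⟨δ, ⟨by linarith, le_rfl⟩, by rw [abs_of_neg ht]; ring⟩

lemma EuclideanSpace.norm_sub_smul_single_last {m : ℕ} (p : EuclideanSpace ℝ (Fin (m + 1))) :
    ‖p - p (Fin.last m) • EuclideanSpace.single (Fin.last m) (1 : ℝ)‖ =
      Real.sqrt (∑ i : Fin m, (p i.castSucc) ^ 2) := by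
  rw [EuclideanSpace.norm_eq, Fin.sum_univ_castSucc]
  simp [(Fin.castSucc_lt_last _).ne, sq_abs]

/-- Here `ℝ^N = ℝ^{m+1}`, `p_N = p (Fin.last m)`, and `|p'|` is the norm of the first `m` coordinates. -/
theorem statement16_general (m : ℕ) (A : Type)
    (δ Mb Ml : ℝ) (hδ : 0 < δ)
    (b : A → EuclideanSpace ℝ (Fin (m + 1))) (l : A → ℝ)
    (hbM : ∀ α, ‖b α‖ ≤ Mb) (hlM : ∀ α, |l α| ≤ Ml)
    (hctrl : Icc (-δ) δ ⊆ Set.range fun α =>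
      ⟪b α, EuclideanSpace.single (Fin.last m) (1:ℝ)⟫) :
    ∀ p : EuclideanSpace ℝ (Fin (m + 1)),
      δ * |p (Fin.last m)| -
          max Mb Ml * (1 + Real.sqrt (∑ i : Fin m, (p i.castSucc) ^ 2)) ≤
        sSup (Set.range fun α => -⟪b α, p⟫ - l α) := by
  intro p
  obtain ⟨s, hs, hps⟩ := exists_mem_Icc_mul_eq_neg_mul_abs hδ.le (p (Fin.last m))
  obtain ⟨α, hα⟩ := hctrl hs
  have hnormal := mul_abs_sub_norm_le_neg_inner (p := p) (hbM α) (hα ▸ hps)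
  rw [EuclideanSpace.norm_sub_smul_single_last] at hnormal
  have hq := Real.sqrt_nonneg (∑ i : Fin m, (p i.castSucc) ^ 2)
  calc _ ≤ -⟪b α, p⟫ - l α := by
        linarith [mul_le_mul_of_nonneg_right (le_max_left Mb Ml) hq, le_max_right Mb Ml,
          (abs_le.mp (hlM α)).2]
    _ ≤ _ := le_csSup (bddAbove_range_neg_inner_sub b l p hbM hlM) ⟨α, rfl⟩

/-- Lemma `coer:H`, flat case: coercivity of the Hamiltonian
`H(p) = sup_α {-b(α)·p - l(α)}` in the normal direction `e_N`, under the normal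
controllability hypothesis `{b(α)·e_N : α ∈ A} ⊇ [-δ, δ]`. Here, for
`p ∈ ℝ^N = ℝ^{m+1}`, `p_N = p (Fin.last m)` is the last coordinate and
`√(∑ i, p_i²)` (over the first `m` coordinates) is `|p'|`. -/
theorem statement16 (m : ℕ) (A : Type) [MetricSpace A] [CompactSpace A] [Nonempty A]
    (δ Mb Ml : ℝ) (hδ : 0 < δ) (hMb : 0 < Mb) (hMl : 0 < Ml)
    (b : A → EuclideanSpace ℝ (Fin (m + 1))) (l : A → ℝ)
    (hbc : Continuous b) (hlc : Continuous l)
    (hbM : ∀ α, ‖b α‖ ≤ Mb) (hlM : ∀ α, |l α| ≤ Ml)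
    (hctrl : Icc (-δ) δ ⊆ Set.range fun α =>
      ⟪b α, EuclideanSpace.single (Fin.last m) (1:ℝ)⟫) :
    ∀ p : EuclideanSpace ℝ (Fin (m + 1)),
      δ * |p (Fin.last m)| -
          max Mb Ml * (1 + Real.sqrt (∑ i : Fin m, (p i.castSucc) ^ 2)) ≤
        sSup (Set.range fun α => -⟪b α, p⟫ - l α) :=
  statement16_general m A δ Mb Ml hδ b l hbM hlM hctrl
end

section
/- (Lipschitz regularity of the tangential Hamiltonian) Assume (Ω) and (C1)-(C4), let L_n be a Lipschitz constant of the unit normal field n_1 on H, and set C̄ = L_b + M_b L_n, M = L_b + 2 M_b C̄ δ^{-1}, and m(r) = (L_b + 2 M_l C̄ δ^{-1}) r + m_l(r) for r ≥ 0. Then for any z, z' ∈ H, t, t' ∈ [0,T] and any tangent vectors p_H ∈ T_z H and q_H ∈ T_{z'} H (i.e. vectors of R^N orthogonal to n_1(z) and n_1(z') respectively), one has |H_T(z,t,p_H) - H_T(z',t',q_H)| ≤ M |(z,t) - (z',t')| (|p_H| + |q_H|) + M_b |p_H - q_H| + m(|(z,t) - (z',t')|). -/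
open Set Metric MeasureTheory Filter Topology
open scoped RealInnerProductSpace NNReal

noncomputable section

/-!
Fix `a ∈ A₀(z,t)`. At `(z',t')` the vector `b_H(z',t',a)` is no longer tangent, but its normal
component `e` is at most `C̄ |(z,t) - (z',t')|`, by the Lipschitz bounds on `b_i` and on `n₁`. By
normal controllability there is a control whose normal component is `∓δ`; mixing it with weight
`θ = |e| / (|e| + δ) ≤ C̄ |(z,t) - (z',t')| / δ` cancels `e`, and by convexity of the dynamics-cost
pairs the mixture is again a control, now in `A₀(z',t')`. Its Hamiltonian value differs from that
of `a` by at most the claimed bound; taking suprema and exchanging the two points gives the result.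
-/

namespace TwoDomains

variable {N : ℕ} (D : TwoDomains N) {z : RN N}

lemma mem_closure_Ω1_of_mem_H (hz : z ∈ D.H) : z ∈ closure D.Ω1 :=
  frontier_subset_closure hz

lemma mem_closure_Ω2_of_mem_H (hz : z ∈ D.H) : z ∈ closure D.Ω2 :=
  frontier_subset_closure (D.frontier_eq ▸ hz)

lemma norm_n1 (hz : z ∈ D.H) : ‖D.n1 z‖ = 1 := by
  rw [n1, norm_neg]
  exact D.sd_grad_norm z (D.frontier_sub_nbhd hz)

end TwoDomains

lemma norm_convex_combo_le {E : Type*} [SeminormedAddCommGroup E] [NormedSpace ℝ E]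
    {u v : E} {μ M : ℝ} (hμ : μ ∈ Icc (0:ℝ) 1) (hu : ‖u‖ ≤ M) (hv : ‖v‖ ≤ M) :
    ‖μ • u + (1 - μ) • v‖ ≤ M :=
  mem_closedBall_zero_iff.1 <| convex_closedBall (0 : E) M (mem_closedBall_zero_iff.2 hu)
    (mem_closedBall_zero_iff.2 hv) hμ.1 (sub_nonneg.2 hμ.2) (add_sub_cancel _ _)

section InnerProduct

variable {E : Type*} [NormedAddCommGroup E] [InnerProductSpace ℝ E]

lemma inner_sub_inner_le (u v p q : E) :
    ⟪v, q⟫ - ⟪u, p⟫ ≤ ‖v - u‖ * ‖q‖ + ‖u‖ * ‖q - p‖ := by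
  have h : ⟪v, q⟫ - ⟪u, p⟫ = ⟪v - u, q⟫ + ⟪u, q - p⟫ := by
    rw [inner_sub_left, inner_sub_right]; ring
  rw [h]
  exact add_le_add (real_inner_le_norm _ _) (real_inner_le_norm _ _)

lemma abs_inner_le_of_inner_eq_zero {u v n n' : E} (hu : ⟪u, n⟫ = 0) (hn' : ‖n'‖ = 1) :
    |⟪v, n'⟫| ≤ ‖v - u‖ + ‖u‖ * ‖n' - n‖ := by
  have h : ⟪v, n'⟫ = ⟪v - u, n'⟫ + ⟪u, n' - n⟫ := by
    rw [inner_sub_left, inner_sub_right, hu]; ring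
  rw [h]
  refine (abs_add_le _ _).trans (add_le_add ?_ (abs_real_inner_le_norm _ _))
  simpa [hn'] using abs_real_inner_le_norm (v - u) n'

end InnerProduct

lemma exists_mix_eq_zero {e δ : ℝ} (hδ : 0 < δ) :
    ∃ θ ∈ Icc (0:ℝ) 1, θ * δ ≤ |e| ∧ (1 - θ) * e + θ * (if 0 ≤ e then -δ else δ) = 0 := by
  have hden : 0 < |e| + δ := by positivity
  obtain ⟨θ, hθdef⟩ : ∃ θ : ℝ, θ = |e| / (|e| + δ) := ⟨_, rfl⟩
  have hθ : θ * (|e| + δ) = |e| := by rw [hθdef]; exact div_mul_cancel₀ _ hden.ne'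
  have hθ0 : 0 ≤ θ := by rw [hθdef]; positivity
  refine ⟨θ, ⟨hθ0, by rw [hθdef, div_le_one hden]; linarith⟩, ?_, ?_⟩
  · nlinarith [mul_nonneg hθ0 (abs_nonneg e)]
  · split_ifs with he
    · rw [abs_of_nonneg he] at hθ; linear_combination -hθ
    · rw [abs_of_neg (not_le.1 he)] at hθ; linear_combination hθ

lemma csSup_image_le_csSup_image_add {α β : Type*} {f : α → ℝ} {g : β → ℝ} {s : Set α}
    {t : Set β} {K : ℝ} (hs : s.Nonempty) (hg : BddAbove (g '' t))
    (h : ∀ a ∈ s, ∃ b ∈ t, f a ≤ g b + K) : sSup (f '' s) ≤ sSup (g '' t) + K := by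
  refine csSup_le (hs.image f) ?_
  rintro _ ⟨a, ha, rfl⟩
  obtain ⟨b, hb, hab⟩ := h a ha
  linarith [le_csSup hg (mem_image_of_mem g hb)]

namespace CtrlData

variable {N : ℕ} {A1 A2 : Type} (C : CtrlData N A1 A2) (D : TwoDomains N)

section Convexity

variable (z : RN N) (t : ℝ)

lemma image_bH_lH_eq_convexJoin :
    (fun a => (C.bH z t a, C.lH z t a)) '' {a | a.2.2 ∈ Icc (0:ℝ) 1} =
      convexJoin ℝ (range fun α => (C.b1 z t α, C.l1 z t α))
        (range fun α => (C.b2 z t α, C.l2 z t α)) := by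
  ext w
  simp only [mem_image, mem_ofPred_eq, mem_convexJoin, mem_range, segment, Prod.exists,
    exists_exists_eq_and]
  constructor
  · rintro ⟨α1, α2, μ, hμ, rfl⟩
    exact ⟨α1, α2, μ, 1 - μ, hμ.1, sub_nonneg.2 hμ.2, add_sub_cancel _ _, by
      simp [bH, lH, Prod.smul_mk]⟩
  · rintro ⟨α1, α2, μ, ν, hμ, hν, hμν, rfl⟩
    obtain rfl : ν = 1 - μ := by linarith
    exact ⟨α1, α2, μ, ⟨hμ, by linarith⟩, by simp [bH, lH, Prod.smul_mk]⟩

lemma convex_image_bH_lH (h1 : Convex ℝ (range fun α => (C.b1 z t α, C.l1 z t α)))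
    (h2 : Convex ℝ (range fun α => (C.b2 z t α, C.l2 z t α))) :
    Convex ℝ ((fun a => (C.bH z t a, C.lH z t a)) '' {a | a.2.2 ∈ Icc (0:ℝ) 1}) := by
  rw [image_bH_lH_eq_convexJoin]
  exact h1.convexJoin h2

end Convexity

variable {C D} {T Mb Lb Ml δ : ℝ} {ml : ℝ → ℝ} {z z' : RN N} {t t' : ℝ} {a : A1 × A2 × ℝ}

lemma abs_lH_le (hC2 : C.HypC2 D T Ml ml) (ha : a.2.2 ∈ Icc (0:ℝ) 1) : |C.lH z t a| ≤ Ml := by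
  simpa [lH] using norm_convex_combo_le (E := ℝ) ha (hC2.1 z t a.1) (hC2.2.1 z t a.2.1)

lemma abs_lH_sub_lH_le (hC2 : C.HypC2 D T Ml ml) (hz : z ∈ D.H) (hz' : z' ∈ D.H)
    (ht : t ∈ Icc 0 T) (ht' : t' ∈ Icc 0 T) (ha : a.2.2 ∈ Icc (0:ℝ) 1) :
    |C.lH z t a - C.lH z' t' a| ≤ ml (‖z - z'‖ + |t - t'|) := by
  have h : C.lH z t a - C.lH z' t' a = a.2.2 • (C.l1 z t a.1 - C.l1 z' t' a.1) +
      (1 - a.2.2) • (C.l2 z t a.2.1 - C.l2 z' t' a.2.1) := by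
    simp only [lH, smul_eq_mul]; ring
  rw [h, ← Real.norm_eq_abs]
  exact norm_convex_combo_le ha
    (hC2.2.2.2.2.2.2.1 z (D.mem_closure_Ω1_of_mem_H hz) z' (D.mem_closure_Ω1_of_mem_H hz')
      t ht t' ht' _)
    (hC2.2.2.2.2.2.2.2 z (D.mem_closure_Ω2_of_mem_H hz) z' (D.mem_closure_Ω2_of_mem_H hz')
      t ht t' ht' _)

lemma exists_inner_bH_n1_eq (hC4 : C.HypC4 D T δ) (hz : z ∈ D.H) (ht : t ∈ Icc 0 T) {s : ℝ}
    (hs : s ∈ Icc (-δ) δ) : ∃ a : A1 × A2 × ℝ, a.2.2 ∈ Icc (0:ℝ) 1 ∧ ⟪C.bH z t a, D.n1 z⟫ = s := by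
  obtain ⟨α1, hα1⟩ := (hC4.2 z hz t ht).1 hs
  obtain ⟨α2, -⟩ := (hC4.2 z hz t ht).2 hs
  exact ⟨(α1, α2, 1), ⟨zero_le_one, le_rfl⟩, by simpa [bH] using hα1⟩

lemma nonempty_A0 (hC4 : C.HypC4 D T δ) (hz : z ∈ D.H) (ht : t ∈ Icc 0 T) :
    (C.A0 D z t).Nonempty := by
  obtain ⟨a, ha, h0⟩ := exists_inner_bH_n1_eq hC4 hz ht (s := 0)
    ⟨neg_nonpos.2 hC4.1.le, hC4.1.le⟩
  exact ⟨a, ha, h0⟩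

section Lipschitz

variable [MetricSpace A1] [MetricSpace A2]

lemma norm_bH_le (hC1 : C.HypC1 D T Mb Lb) (ha : a.2.2 ∈ Icc (0:ℝ) 1) : ‖C.bH z t a‖ ≤ Mb :=
  norm_convex_combo_le ha (hC1.2.2.1 z t a.1) (hC1.2.2.2.1 z t a.2.1)

lemma norm_bH_sub_bH_le (hC1 : C.HypC1 D T Mb Lb) (hz : z ∈ D.H) (hz' : z' ∈ D.H)
    (ht : t ∈ Icc 0 T) (ht' : t' ∈ Icc 0 T) (ha : a.2.2 ∈ Icc (0:ℝ) 1) :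
    ‖C.bH z t a - C.bH z' t' a‖ ≤ Lb * (‖z - z'‖ + |t - t'|) := by
  have h : C.bH z t a - C.bH z' t' a = a.2.2 • (C.b1 z t a.1 - C.b1 z' t' a.1) +
      (1 - a.2.2) • (C.b2 z t a.2.1 - C.b2 z' t' a.2.1) := by
    simp only [bH, smul_sub]; abel
  rw [h]
  exact norm_convex_combo_le ha
    (hC1.2.2.2.2.1 z (D.mem_closure_Ω1_of_mem_H hz) z' (D.mem_closure_Ω1_of_mem_H hz')
      t ht t' ht' _)
    (hC1.2.2.2.2.2 z (D.mem_closure_Ω2_of_mem_H hz) z' (D.mem_closure_Ω2_of_mem_H hz')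
      t ht t' ht' _)

lemma bddAbove_image_A0 (hC1 : C.HypC1 D T Mb Lb) (hC2 : C.HypC2 D T Ml ml) (p : RN N) :
    BddAbove ((fun a => -⟪C.bH z t a, p⟫ - C.lH z t a) '' C.A0 D z t) := by
  refine ⟨Mb * ‖p‖ + Ml, ?_⟩
  rintro _ ⟨a, ha, rfl⟩
  have hb := (abs_real_inner_le_norm (C.bH z t a) p).trans
    (mul_le_mul_of_nonneg_right (norm_bH_le hC1 ha.1) (norm_nonneg p))
  linarith [neg_abs_le ⟪C.bH z t a, p⟫, neg_abs_le (C.lH z t a),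
    abs_lH_le hC2 ha.1 (z := z) (t := t)]

lemma abs_inner_bH_n1_le (hC1 : C.HypC1 D T Mb Lb) {Ln : ℝ≥0} (hLn : LipschitzOnWith Ln D.n1 D.H)
    (hz : z ∈ D.H) (hz' : z' ∈ D.H) (ht : t ∈ Icc 0 T) (ht' : t' ∈ Icc 0 T)
    (ha : a ∈ C.A0 D z t) :
    |⟪C.bH z' t' a, D.n1 z'⟫| ≤ (Lb + Mb * Ln) * (‖z - z'‖ + |t - t'|) := by
  have hb := norm_bH_le hC1 ha.1 (z := z) (t := t)
  have hn : ‖D.n1 z' - D.n1 z‖ ≤ Ln * ‖z - z'‖ := by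
    simpa [dist_eq_norm, norm_sub_rev z'] using hLn.dist_le_mul z' hz' z hz
  have hMb : 0 ≤ Mb := (norm_nonneg _).trans hb
  calc |⟪C.bH z' t' a, D.n1 z'⟫|
      ≤ ‖C.bH z' t' a - C.bH z t a‖ + ‖C.bH z t a‖ * ‖D.n1 z' - D.n1 z‖ :=
        abs_inner_le_of_inner_eq_zero ha.2 (D.norm_n1 hz')
    _ ≤ Lb * (‖z - z'‖ + |t - t'|) + Mb * (Ln * (‖z - z'‖ + |t - t'|)) := by
        rw [norm_sub_rev]
        gcongr
        · exact norm_bH_sub_bH_le hC1 hz hz' ht ht' ha.1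
        · exact hn.trans (by gcongr; exact le_add_of_nonneg_right (abs_nonneg _))
    _ = _ := by ring

lemma exists_mem_A0_mix (hC1 : C.HypC1 D T Mb Lb) (hC3 : C.HypC3 D T) (hC4 : C.HypC4 D T δ)
    {Ln : ℝ≥0} (hLn : LipschitzOnWith Ln D.n1 D.H) (hz : z ∈ D.H) (hz' : z' ∈ D.H)
    (ht : t ∈ Icc 0 T) (ht' : t' ∈ Icc 0 T) (ha : a ∈ C.A0 D z t) :
    ∃ a' ∈ C.A0 D z' t', ∃ c : A1 × A2 × ℝ, c.2.2 ∈ Icc (0:ℝ) 1 ∧ ∃ θ ∈ Icc (0:ℝ) 1,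
      θ * δ ≤ (Lb + Mb * Ln) * (‖z - z'‖ + |t - t'|) ∧
      (C.bH z' t' a', C.lH z' t' a') =
        (1 - θ) • (C.bH z' t' a, C.lH z' t' a) + θ • (C.bH z' t' c, C.lH z' t' c) := by
  set e := ⟪C.bH z' t' a, D.n1 z'⟫ with he
  obtain ⟨c, hc, hce⟩ := exists_inner_bH_n1_eq hC4 hz' ht' (s := if 0 ≤ e then -δ else δ)
    (by split_ifs <;> constructor <;> linarith [hC4.1])
  obtain ⟨θ, hθ, hθδ, hmix⟩ := exists_mix_eq_zero (e := e) hC4.1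
  have hconv := convex_image_bH_lH C z' t' (hC3.1 z' (D.mem_closure_Ω1_of_mem_H hz') t' ht').2
    (hC3.2 z' (D.mem_closure_Ω2_of_mem_H hz') t' ht').2
  obtain ⟨a', ha', hpair⟩ := hconv ⟨a, ha.1, rfl⟩ ⟨c, hc, rfl⟩ (sub_nonneg.2 hθ.2) hθ.1
    (sub_add_cancel 1 θ)
  refine ⟨a', ⟨ha', ?_⟩, c, hc, θ, hθ,
    hθδ.trans (abs_inner_bH_n1_le hC1 hLn hz hz' ht ht' ha), hpair⟩
  have hb : C.bH z' t' a' = (1 - θ) • C.bH z' t' a + θ • C.bH z' t' c := congrArg Prod.fst hpair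
  rw [hb, inner_add_left, real_inner_smul_left, real_inner_smul_left, hce, ← he, hmix]

lemma neg_inner_bH_sub_lH_le_combo (hC1 : C.HypC1 D T Mb Lb) (hC2 : C.HypC2 D T Ml ml)
    (hz : z ∈ D.H) (hz' : z' ∈ D.H) (ht : t ∈ Icc 0 T) (ht' : t' ∈ Icc 0 T)
    (ha : a.2.2 ∈ Icc (0:ℝ) 1) {c : A1 × A2 × ℝ} (hc : c.2.2 ∈ Icc (0:ℝ) 1)
    {θ κ : ℝ} (hθ : θ ∈ Icc (0:ℝ) 1) (hθκ : θ ≤ κ) (p q : RN N) :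
    -⟪C.bH z t a, p⟫ - C.lH z t a ≤
      -⟪(1 - θ) • C.bH z' t' a + θ • C.bH z' t' c, q⟫ -
          ((1 - θ) * C.lH z' t' a + θ * C.lH z' t' c) +
        ((Lb * (‖z - z'‖ + |t - t'|) + 2 * Mb * κ) * (‖p‖ + ‖q‖) + Mb * ‖p - q‖ +
          (Lb * (‖z - z'‖ + |t - t'|) + 2 * Ml * κ + ml (‖z - z'‖ + |t - t'|))) := by
  set Δ := ‖z - z'‖ + |t - t'|
  have hbΔ := norm_bH_sub_bH_le hC1 hz hz' ht ht' ha
  have hbc := norm_bH_le hC1 hc (z := z') (t := t')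
  have hMb : 0 ≤ Mb := (norm_nonneg _).trans hbc
  have hMl : 0 ≤ Ml := (abs_nonneg _).trans (abs_lH_le hC2 hc (z := z') (t := t'))
  have hLbΔ : 0 ≤ Lb * Δ := (norm_nonneg _).trans hbΔ
  have hvel : ⟪C.bH z' t' a, q⟫ - ⟪C.bH z t a, p⟫ ≤ Lb * Δ * ‖q‖ + Mb * ‖p - q‖ := by
    refine (inner_sub_inner_le _ _ _ _).trans ?_
    rw [norm_sub_rev, norm_sub_rev q]
    gcongr
    exact norm_bH_le hC1 ha
  have hcost : C.lH z' t' a - C.lH z t a ≤ ml Δ :=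
    (abs_sub_le_iff.1 (abs_lH_sub_lH_le hC2 hz hz' ht ht' ha)).2
  have hvelc : ⟪C.bH z' t' c, q⟫ - ⟪C.bH z' t' a, q⟫ ≤ 2 * Mb * ‖q‖ := by
    rw [← inner_sub_left]
    refine (real_inner_le_norm _ _).trans (mul_le_mul_of_nonneg_right ?_ (norm_nonneg q))
    linarith [norm_sub_le (C.bH z' t' c) (C.bH z' t' a), norm_bH_le hC1 ha (z := z') (t := t')]
  have hcostc : C.lH z' t' c - C.lH z' t' a ≤ 2 * Ml := by
    linarith [abs_le.1 (abs_lH_le hC2 hc (z := z') (t := t')),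
      abs_le.1 (abs_lH_le hC2 ha (z := z') (t := t'))]
  have hmix : θ * (2 * Mb * ‖q‖ + 2 * Ml) ≤ κ * (2 * Mb * ‖q‖ + 2 * Ml) :=
    mul_le_mul_of_nonneg_right hθκ (by positivity)
  have hκp : 0 ≤ Mb * κ * ‖p‖ := by have := hθ.1.trans hθκ; positivity
  rw [inner_add_left, real_inner_smul_left, real_inner_smul_left]
  linarith [mul_le_mul_of_nonneg_left hvelc hθ.1, mul_le_mul_of_nonneg_left hcostc hθ.1,
    mul_nonneg hLbΔ (norm_nonneg p)]

lemma HamT_le_HamT_add (hC1 : C.HypC1 D T Mb Lb) (hC2 : C.HypC2 D T Ml ml)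
    (hC3 : C.HypC3 D T) (hC4 : C.HypC4 D T δ) {Ln : ℝ≥0} (hLn : LipschitzOnWith Ln D.n1 D.H)
    (hz : z ∈ D.H) (hz' : z' ∈ D.H) (ht : t ∈ Icc 0 T) (ht' : t' ∈ Icc 0 T) (p q : RN N) :
    C.HamT D z t p ≤ C.HamT D z' t' q +
      ((Lb + 2 * Mb * (Lb + Mb * Ln) / δ) * (‖z - z'‖ + |t - t'|) * (‖p‖ + ‖q‖) +
        Mb * ‖p - q‖ +
        ((Lb + 2 * Ml * (Lb + Mb * Ln) / δ) * (‖z - z'‖ + |t - t'|) +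
          ml (‖z - z'‖ + |t - t'|))) := by
  refine csSup_image_le_csSup_image_add (nonempty_A0 hC4 hz ht) (bddAbove_image_A0 hC1 hC2 q)
    fun a ha => ?_
  obtain ⟨a', ha', c, hc, θ, hθ, hθδ, hpair⟩ := exists_mem_A0_mix hC1 hC3 hC4 hLn hz hz' ht ht' ha
  have hθκ : θ ≤ (Lb + Mb * Ln) * (‖z - z'‖ + |t - t'|) / δ := (le_div_iff₀ hC4.1).2 hθδ
  refine ⟨a', ha', ?_⟩
  obtain ⟨hb, hl⟩ := Prod.ext_iff.1 hpair
  simp only [Prod.fst_add, Prod.snd_add, Prod.smul_fst, Prod.smul_snd, smul_eq_mul] at hb hl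
  convert neg_inner_bH_sub_lH_le_combo hC1 hC2 hz hz' ht ht' ha.1 hc hθ hθκ p q using 2
  · rw [hb, hl]
  · ring

end Lipschitz

end CtrlData

theorem statement18_general
    {N : ℕ} (D : TwoDomains N) (T : ℝ)
    {A1 A2 : Type} [MetricSpace A1]
    [MetricSpace A2]
    (C : CtrlData N A1 A2) (Mb Lb Ml δ : ℝ) (ml : ℝ → ℝ)
    (hC1 : C.HypC1 D T Mb Lb) (hC2 : C.HypC2 D T Ml ml)
    (hC3 : C.HypC3 D T) (hC4 : C.HypC4 D T δ)
    (Ln : ℝ≥0) (hLn : LipschitzOnWith Ln D.n1 D.H) :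
    ∀ z ∈ D.H, ∀ z' ∈ D.H, ∀ t ∈ Icc (0:ℝ) T, ∀ t' ∈ Icc (0:ℝ) T,
      ∀ p q : RN N, ⟪p, D.n1 z⟫ = 0 → ⟪q, D.n1 z'⟫ = 0 →
        |C.HamT D z t p - C.HamT D z' t' q| ≤
          (Lb + 2 * Mb * (Lb + Mb * (Ln : ℝ)) / δ) * (‖z - z'‖ + |t - t'|) * (‖p‖ + ‖q‖) +
            Mb * ‖p - q‖ +
            ((Lb + 2 * Ml * (Lb + Mb * (Ln : ℝ)) / δ) * (‖z - z'‖ + |t - t'|) +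
              ml (‖z - z'‖ + |t - t'|)) := by
  intro z hz z' hz' t ht t' ht' p q _ _
  have h := C.HamT_le_HamT_add hC1 hC2 hC3 hC4 hLn hz hz' ht ht' p q
  have h' := C.HamT_le_HamT_add hC1 hC2 hC3 hC4 hLn hz' hz ht' ht q p
  rw [norm_sub_rev z', abs_sub_comm t', norm_sub_rev q, add_comm ‖q‖] at h'
  rw [abs_sub_le_iff]
  constructor <;> linarith

/-- Lemma `lemHTlip`: Lipschitz-type regularity of the tangential
Hamiltonian `H_T` with respect to all its variables. -/
theorem statement18
    {N : ℕ} (D : TwoDomains N) (T : ℝ) (hT : 0 < T)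
    {A1 A2 : Type} [MetricSpace A1] [CompactSpace A1] [Nonempty A1]
    [MetricSpace A2] [CompactSpace A2] [Nonempty A2]
    [MeasurableSpace A1] [BorelSpace A1] [MeasurableSpace A2] [BorelSpace A2]
    (C : CtrlData N A1 A2) (Mb Lb Ml δ : ℝ) (ml : ℝ → ℝ)
    (hC1 : C.HypC1 D T Mb Lb) (hC2 : C.HypC2 D T Ml ml)
    (hC3 : C.HypC3 D T) (hC4 : C.HypC4 D T δ)
    (Ln : ℝ≥0) (hLn : LipschitzOnWith Ln D.n1 D.H) :
    ∀ z ∈ D.H, ∀ z' ∈ D.H, ∀ t ∈ Icc (0:ℝ) T, ∀ t' ∈ Icc (0:ℝ) T,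
      ∀ p q : RN N, ⟪p, D.n1 z⟫ = 0 → ⟪q, D.n1 z'⟫ = 0 →
        |C.HamT D z t p - C.HamT D z' t' q| ≤
          (Lb + 2 * Mb * (Lb + Mb * (Ln : ℝ)) / δ) * (‖z - z'‖ + |t - t'|) * (‖p‖ + ‖q‖) +
            Mb * ‖p - q‖ +
            ((Lb + 2 * Ml * (Lb + Mb * (Ln : ℝ)) / δ) * (‖z - z'‖ + |t - t'|) +
              ml (‖z - z'‖ + |t - t'|)) :=
  statement18_general D T C Mb Lb Ml δ ml hC1 hC2 hC3 hC4 Ln hLn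
end
end
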